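/- Let p ∈ L²(ℝ) and define for k ≥ 0 the functions (p * e_k), where (e_k) is an orthonormal basis of L²(ℝ). Then for any z ∈ L²(ℝ), the pointwise multiplication operator w ↦ z·w, viewed as a map from the reproducing space of the convolution, satisfies Σ_k ‖z · (p * e_k)‖²_{L²} ≤ ‖p‖²_{L²} ‖z‖²_{L²}. In particular, multiplication by z is a Hilbert–Schmidt operator from L²_Q = Q^{1/2}(L²) into L²(ℝ) with Hilbert–Schmidt norm bounded by a constant times ‖z‖_{L²}, where Q has convolution kernel q = p * p. -/

import Mathlib

open MeasureTheory
open scoped ENNReal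

/-!
For fixed `x`, `∫ p (x - y) e_k y dy` is the `k`-th coefficient of the translate `p (x - ·)`
in the orthonormal family `(e_k)`, so by Bessel's inequality the squares of these coefficients
sum to at most `‖p (x - ·)‖² = ‖p‖²`. Multiplying by `z x ²` and integrating, with monotone
convergence to exchange `∑'` and `∫⁻`, gives the bound.
-/

section L2

variable {α : Type*} [MeasurableSpace α] {μ : Measure α}

theorem eLpNorm_two_sq_eq_lintegral {E : Type*} [NormedAddCommGroup E] (f : α → E) :
    eLpNorm f 2 μ ^ 2 = ∫⁻ x, ‖f x‖ₑ ^ 2 ∂μ := by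
  simpa using eLpNorm_nnreal_pow_eq_lintegral (μ := μ) (f := f) (p := 2) two_ne_zero

theorem Orthonormal.sum_sq_integral_mul_le {ι : Type*} {e : ι → Lp ℝ 2 μ}
    (he : Orthonormal ℝ e) {f : α → ℝ} (hf : MemLp f 2 μ) (s : Finset ι) :
    ∑ k ∈ s, (∫ y, f y * e k y ∂μ) ^ 2 ≤ (eLpNorm f 2 μ).toReal ^ 2 := by
  have hinner (k : ι) : ∫ y, f y * e k y ∂μ = inner ℝ (e k) (hf.toLp f) := by
    rw [L2.inner_def]
    refine integral_congr_ae ?_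
    filter_upwards [hf.coeFn_toLp] with y hy
    simp [hy]
  simpa [hinner, Lp.norm_toLp] using he.sum_inner_products_le (hf.toLp f) (s := s)

theorem Real.enorm_sq (r : ℝ) : ‖r‖ₑ ^ 2 = ENNReal.ofReal (r ^ 2) := by
  rw [Real.enorm_eq_ofReal_abs, ← ENNReal.ofReal_pow (abs_nonneg r), sq_abs]

theorem tsum_eLpNorm_mul_sq_le_ofReal {ι : Type*} [Countable ι] {z : α → ℝ} {G : ι → α → ℝ}
    {C : ℝ} (hz : AEStronglyMeasurable z μ) (hG : ∀ k, AEStronglyMeasurable (G k) μ)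
    (hC : ∀ s : Finset ι, ∀ x, ∑ k ∈ s, G k x ^ 2 ≤ C) :
    ∑' k, eLpNorm (fun x => z x * G k x) 2 μ ^ 2 ≤ ENNReal.ofReal C * eLpNorm z 2 μ ^ 2 := by
  have hpointwise (x : α) : ∑' k, ‖G k x‖ₑ ^ 2 ≤ ENNReal.ofReal C := by
    refine ENNReal.summable.tsum_le_of_sum_le fun s => ?_
    simp_rw [Real.enorm_sq]
    rw [← ENNReal.ofReal_sum_of_nonneg fun k _ => sq_nonneg _]
    exact ENNReal.ofReal_le_ofReal (hC s x)
  calc ∑' k, eLpNorm (fun x => z x * G k x) 2 μ ^ 2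
      = ∫⁻ x, ‖z x‖ₑ ^ 2 * ∑' k, ‖G k x‖ₑ ^ 2 ∂μ := by
        simp_rw [eLpNorm_two_sq_eq_lintegral, enorm_mul, mul_pow, ← ENNReal.tsum_mul_left]
        exact (lintegral_tsum fun k => (hz.enorm.pow_const 2).mul ((hG k).enorm.pow_const 2)).symm
    _ ≤ ∫⁻ x, ‖z x‖ₑ ^ 2 * ENNReal.ofReal C ∂μ := by gcongr with x; exact hpointwise x
    _ = ENNReal.ofReal C * eLpNorm z 2 μ ^ 2 := by
        rw [lintegral_mul_const'' _ (hz.enorm.pow_const 2), eLpNorm_two_sq_eq_lintegral, mul_comm]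

theorem tsum_toReal_eLpNorm_mul_sq_le {ι : Type*} [Countable ι] {z : α → ℝ} {G : ι → α → ℝ}
    {C : ℝ} (hC₀ : 0 ≤ C) (hz : MemLp z 2 μ) (hG : ∀ k, AEStronglyMeasurable (G k) μ)
    (hC : ∀ s : Finset ι, ∀ x, ∑ k ∈ s, G k x ^ 2 ≤ C) :
    ∑' k, (eLpNorm (fun x => z x * G k x) 2 μ).toReal ^ 2 ≤ C * (eLpNorm z 2 μ).toReal ^ 2 := by
  have hbound := tsum_eLpNorm_mul_sq_le_ofReal hz.aestronglyMeasurable hG hC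
  have hbound_ne_top : ENNReal.ofReal C * eLpNorm z 2 μ ^ 2 ≠ ∞ := by
    finiteness [hz.eLpNorm_ne_top]
  have hfinite := ne_top_of_le_ne_top hbound_ne_top hbound
  calc ∑' k, (eLpNorm (fun x => z x * G k x) 2 μ).toReal ^ 2
      = (∑' k, eLpNorm (fun x => z x * G k x) 2 μ ^ 2).toReal := by
        simp_rw [← ENNReal.toReal_pow]
        exact (ENNReal.tsum_toReal_eq (ENNReal.ne_top_of_tsum_ne_top hfinite)).symm
    _ ≤ (ENNReal.ofReal C * eLpNorm z 2 μ ^ 2).toReal := ENNReal.toReal_mono hbound_ne_top hbound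
    _ = C * (eLpNorm z 2 μ).toReal ^ 2 := by
        rw [ENNReal.toReal_mul, ENNReal.toReal_pow, ENNReal.toReal_ofReal hC₀]

end L2

section Convolution

variable {G : Type*} [AddGroup G] [MeasurableSpace G] [MeasurableNeg G] {μ : Measure G}

theorem MeasureTheory.AEStronglyMeasurable.integral_comp_sub_mul [MeasurableAdd₂ G] [SFinite μ]
    [μ.IsAddLeftInvariant] {f g : G → ℝ} (hf : AEStronglyMeasurable f μ)
    (hg : AEStronglyMeasurable g μ) :
    AEStronglyMeasurable (fun x => ∫ y, f (x - y) * g y ∂μ) μ :=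
  ((hf.comp_quasiMeasurePreserving (quasiMeasurePreserving_sub μ μ)).mul
    hg.comp_snd).integral_prod_right'

theorem Orthonormal.sum_sq_integral_comp_sub_mul_le [MeasurableAdd G] [μ.IsAddLeftInvariant]
    [μ.IsNegInvariant] {ι : Type*} {e : ι → Lp ℝ 2 μ} (he : Orthonormal ℝ e) {f : G → ℝ} (hf : MemLp f 2 μ)
    (x : G) (s : Finset ι) :
    ∑ k ∈ s, (∫ y, f (x - y) * e k y ∂μ) ^ 2 ≤ (eLpNorm f 2 μ).toReal ^ 2 := by
  have htranslate := Measure.measurePreserving_sub_left μ x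
  have h := he.sum_sq_integral_mul_le (hf.comp_measurePreserving htranslate) s
  rwa [eLpNorm_comp_measurePreserving hf.aestronglyMeasurable htranslate] at h

end Convolution

/-- For `p, z ∈ L²(ℝ)` and `(e_k)` an orthonormal (Hilbert) basis of `L²(ℝ)`, the
pointwise multiplication by `z` applied to the convolutions `p * e_k` satisfies
`Σ_k ‖z · (p * e_k)‖²_{L²} ≤ ‖p‖²_{L²} ‖z‖²_{L²}`; in particular multiplication by `z`
is Hilbert–Schmidt from `L²_Q` (with kernel `q = p * p`) into `L²(ℝ)`. -/
theorem mul_conv_hilbertSchmidt (p z : ℝ → ℝ)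
    (hp : MemLp p 2 (volume : Measure ℝ)) (hz : MemLp z 2 (volume : Measure ℝ))
    (e : HilbertBasis ℕ ℝ (Lp ℝ 2 (volume : Measure ℝ))) :
    ∑' k : ℕ,
        ((eLpNorm (fun x => z x * ∫ y, p (x - y) * (e k : ℝ → ℝ) y) 2
          (volume : Measure ℝ)).toReal) ^ 2
      ≤ ((eLpNorm p 2 (volume : Measure ℝ)).toReal) ^ 2 *
        ((eLpNorm z 2 (volume : Measure ℝ)).toReal) ^ 2 :=
  tsum_toReal_eLpNorm_mul_sq_le (by positivity) hz
    (fun k => hp.aestronglyMeasurable.integral_comp_sub_mul (Lp.aestronglyMeasurable (e k)))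
    (fun s x => e.orthonormal.sum_sq_integral_comp_sub_mul_le hp x s)
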